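/- arXiv:2106.13597 — 8 statements merged into one kernel-verified Lean document; each statement's English description precedes it below -/
import Mathlib

section
/- Let C* vanish identically, i.e. C*(X,Y,Z,W) = 0 for all X,Y,Z,W ∈ V, with a ≠ 0 and a + (n−2)b ≠ 0. Then the Ricci tensor is proportional to the metric: S(Y,Z) = α g(Y,Z) for all Y,Z ∈ V, where α = (r / (1 + (b/a)(n−2))) · (−b/a + (1/n)(1 + 2b(n−1)/a)). -/
/-!
Contract the identity `C* = 0` in its first and last slots over an orthonormal basis. Since
`S` is the trace of `R̄` in exactly these slots, this gives
`(a + (n - 2) b) S(Y,Z) = r (a / n + 2 b (n - 1) / n - b) g(Y,Z)`, and the hypothesis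
`a + (n - 2) b ≠ 0` lets one divide.
-/

open scoped RealInnerProductSpace

section Contraction

variable {V : Type*} [NormedAddCommGroup V] [InnerProductSpace ℝ V]

theorem isLinearMap_of_map_smul_add {f : V → ℝ}
    (hf : ∀ (c : ℝ) (x y : V), f (c • x + y) = c * f x + f y) : IsLinearMap ℝ f := by
  have h0 : f 0 = 0 := by simpa using hf 1 0 0
  exact ⟨fun x y => by simpa using hf 1 x y, fun c x => by simpa [h0] using hf c x 0⟩

variable {ι : Type*} [Fintype ι] {e : Module.Basis ι ℝ V}

theorem Orthonormal.sum_inner_mul_apply (he : Orthonormal ℝ e) {f : V → ℝ}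
    (hf : IsLinearMap ℝ f) (Y : V) : ∑ i, ⟪e i, Y⟫ * f (e i) = f Y := by
  let F : V →ₗ[ℝ] ℝ := IsLinearMap.mk' f hf
  have hY := (e.toOrthonormalBasis he).sum_repr' Y
  simp only [Module.Basis.coe_toOrthonormalBasis] at hY
  calc ∑ i, ⟪e i, Y⟫ * f (e i) = F (∑ i, ⟪e i, Y⟫ • e i) := by simp [F]
    _ = f Y := by rw [hY]; rfl

theorem sum_quasiConformal_contraction (he : Orthonormal ℝ e) (Rb : V → V → V → V → ℝ)
    (S : V → V → ℝ) (hS : ∀ Y Z : V, S Y Z = ∑ i, Rb (e i) Y Z (e i))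
    (hSl : ∀ Z, IsLinearMap ℝ (S · Z)) (hSr : ∀ Y, IsLinearMap ℝ (S Y))
    (a b K : ℝ) (Y Z : V) :
    ∑ i, (a * Rb (e i) Y Z (e i)
      + b * (S Y Z * ⟪e i, e i⟫ - S (e i) Z * ⟪Y, e i⟫
             + ⟪Y, Z⟫ * S (e i) (e i) - ⟪e i, Z⟫ * S Y (e i))
      - K * (⟪Y, Z⟫ * ⟪e i, e i⟫ - ⟪e i, Z⟫ * ⟪Y, e i⟫)) =
      (a + ((Fintype.card ι : ℝ) - 2) * b) * S Y Z
      + b * (∑ i, S (e i) (e i)) * ⟪Y, Z⟫ - K * ((Fintype.card ι : ℝ) - 1) * ⟪Y, Z⟫ := by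
  have hnorm : ∀ i, ⟪e i, e i⟫ = 1 := fun i => by simp [he.1 i]
  have hSY : ∑ i, S (e i) Z * ⟪Y, e i⟫ = S Y Z := by
    simpa only [real_inner_comm, mul_comm] using he.sum_inner_mul_apply (hSl Z) Y
  have hSZ : ∑ i, ⟪e i, Z⟫ * S Y (e i) = S Y Z := he.sum_inner_mul_apply (hSr Y) Z
  have hg : ∑ i, ⟪e i, Z⟫ * ⟪Y, e i⟫ = ⟪Y, Z⟫ := by
    simpa only [real_inner_comm Y] using
      he.sum_inner_mul_apply (f := (⟪Y, ·⟫)) (isLinearMap_of_map_smul_add fun c x y => by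
        rw [inner_add_right, real_inner_smul_right]) Z
  simp only [hnorm, mul_add, mul_sub, Finset.sum_add_distrib, Finset.sum_sub_distrib,
    ← Finset.mul_sum, ← hS, hSY, hSZ, hg, mul_one, Finset.sum_const, Finset.card_univ,
    nsmul_eq_mul]
  ring

end Contraction

theorem eq_mul_of_quasiConformal_trace {a b n r s g : ℝ} (ha : a ≠ 0) (hn : n ≠ 0)
    (hn1 : n - 1 ≠ 0) (hab : a + (n - 2) * b ≠ 0)
    (htr : (a + (n - 2) * b) * s + b * r * g - (r / n) * (a / (n - 1) + 2 * b) * (n - 1) * g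
      = 0) :
    s = (r / (1 + (b / a) * (n - 2))) * (-(b / a) + (1 / n) * (1 + 2 * b * (n - 1) / a)) * g := by
  have hab' : 1 + (b / a) * (n - 2) = (a + (n - 2) * b) / a := by field_simp
  rw [hab', ← sub_eq_zero, ← mul_right_inj' hab, mul_zero, ← htr]
  field_simp
  ring

theorem stmt0_general
    {V : Type*} [NormedAddCommGroup V] [InnerProductSpace ℝ V]
    (n : ℕ) (hn : 3 < n)
    (e : Module.Basis (Fin n) ℝ V) (he : Orthonormal ℝ e)
    (Rb : V → V → V → V → ℝ)
    (hlin2 : ∀ (c : ℝ) (X Y Y' Z W : V),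
      Rb X (c • Y + Y') Z W = c * Rb X Y Z W + Rb X Y' Z W)
    (hlin3 : ∀ (c : ℝ) (X Y Z Z' W : V),
      Rb X Y (c • Z + Z') W = c * Rb X Y Z W + Rb X Y Z' W)
    (S : V → V → ℝ) (hS : ∀ Y Z : V, S Y Z = ∑ i, Rb (e i) Y Z (e i))
    (r : ℝ) (hr : r = ∑ i, S (e i) (e i))
    (a b : ℝ)
    (Cs : V → V → V → V → ℝ)
    (hC : ∀ X Y Z W : V, Cs X Y Z W =
      a * Rb X Y Z W
      + b * (S Y Z * ⟪X, W⟫ - S X Z * ⟪Y, W⟫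
             + ⟪Y, Z⟫ * S X W - ⟪X, Z⟫ * S Y W)
      - (r / n) * (a / ((n : ℝ) - 1) + 2 * b)
        * (⟪Y, Z⟫ * ⟪X, W⟫ - ⟪X, Z⟫ * ⟪Y, W⟫))
    (ha : a ≠ 0) (hab : a + ((n : ℝ) - 2) * b ≠ 0)
    (hflat : ∀ X Y Z W : V, Cs X Y Z W = 0) :
    ∀ Y Z : V, S Y Z =
      (r / (1 + (b / a) * ((n : ℝ) - 2)))
        * (-(b / a) + (1 / (n : ℝ)) * (1 + 2 * b * ((n : ℝ) - 1) / a))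
        * ⟪Y, Z⟫ := by
  intro Y Z
  have hSl : ∀ Z, IsLinearMap ℝ (S · Z) := fun Z => isLinearMap_of_map_smul_add fun c x y => by
    simp only [hS, hlin2, Finset.sum_add_distrib, Finset.mul_sum]
  have hSr : ∀ Y, IsLinearMap ℝ (S Y) := fun Y => isLinearMap_of_map_smul_add fun c x y => by
    simp only [hS, hlin3, Finset.sum_add_distrib, Finset.mul_sum]
  have htr := sum_quasiConformal_contraction he Rb S hS hSl hSr a b
    ((r / n) * (a / ((n : ℝ) - 1) + 2 * b)) Y Z
  simp only [← hC, hflat, Finset.sum_const_zero, Fintype.card_fin, ← hr] at htr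
  have hn' : (3 : ℝ) < n := by exact_mod_cast hn
  exact eq_mul_of_quasiConformal_trace ha (by linarith) (by linarith) hab (by linarith)

theorem stmt0
    {V : Type*} [NormedAddCommGroup V] [InnerProductSpace ℝ V]
    (n : ℕ) (hn : 3 < n)
    (e : Module.Basis (Fin n) ℝ V) (he : Orthonormal ℝ e)
    (Rb : V → V → V → V → ℝ)
    (hlin1 : ∀ (c : ℝ) (X X' Y Z W : V),
      Rb (c • X + X') Y Z W = c * Rb X Y Z W + Rb X' Y Z W)
    (hlin2 : ∀ (c : ℝ) (X Y Y' Z W : V),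
      Rb X (c • Y + Y') Z W = c * Rb X Y Z W + Rb X Y' Z W)
    (hlin3 : ∀ (c : ℝ) (X Y Z Z' W : V),
      Rb X Y (c • Z + Z') W = c * Rb X Y Z W + Rb X Y Z' W)
    (hlin4 : ∀ (c : ℝ) (X Y Z W W' : V),
      Rb X Y Z (c • W + W') = c * Rb X Y Z W + Rb X Y Z W')
    (hskew1 : ∀ X Y Z W : V, Rb X Y Z W = - Rb Y X Z W)
    (hskew2 : ∀ X Y Z W : V, Rb X Y Z W = - Rb X Y W Z)
    (hpair : ∀ X Y Z W : V, Rb X Y Z W = Rb Z W X Y)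
    (S : V → V → ℝ) (hS : ∀ Y Z : V, S Y Z = ∑ i, Rb (e i) Y Z (e i))
    (r : ℝ) (hr : r = ∑ i, S (e i) (e i))
    (a b : ℝ)
    (Cs : V → V → V → V → ℝ)
    (hC : ∀ X Y Z W : V, Cs X Y Z W =
      a * Rb X Y Z W
      + b * (S Y Z * ⟪X, W⟫ - S X Z * ⟪Y, W⟫
             + ⟪Y, Z⟫ * S X W - ⟪X, Z⟫ * S Y W)
      - (r / n) * (a / ((n : ℝ) - 1) + 2 * b)
        * (⟪Y, Z⟫ * ⟪X, W⟫ - ⟪X, Z⟫ * ⟪Y, W⟫))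
    (ha : a ≠ 0) (hab : a + ((n : ℝ) - 2) * b ≠ 0)
    (hflat : ∀ X Y Z W : V, Cs X Y Z W = 0) :
    ∀ Y Z : V, S Y Z =
      (r / (1 + (b / a) * ((n : ℝ) - 2)))
        * (-(b / a) + (1 / (n : ℝ)) * (1 + 2 * b * ((n : ℝ) - 1) / a))
        * ⟪Y, Z⟫ :=
  stmt0_general n hn e he Rb hlin2 hlin3 S hS r hr a b Cs hC ha hab hflat
end

section
/- Suppose C*(X,Y,Z,W) = 0 for all X,Y,Z,W ∈ V and a ≠ 0. Then R̄ is of hyper quasi-constant curvature form: setting P(Y,Z) := −(b/a) S(Y,Z) (a symmetric bilinear form) and l := (r/n)(1/(n−1) + 2b/a), one has R̄(X,Y,Z,W) = l[g(Y,Z)g(X,W) − g(X,Z)g(Y,W)] + g(X,W)P(Y,Z) − g(X,Z)P(Y,W) + g(Y,Z)P(X,W) − g(Y,W)P(X,Z) for all X,Y,Z,W ∈ V. -/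
open scoped RealInnerProductSpace

theorem stmt2_general
    {V : Type*} [NormedAddCommGroup V] [InnerProductSpace ℝ V]
    (n : ℕ)
    (Rb : V → V → V → V → ℝ)
    (S : V → V → ℝ)
    (r : ℝ)
    (a b : ℝ)
    (Cs : V → V → V → V → ℝ)
    (hC : ∀ X Y Z W : V, Cs X Y Z W =
      a * Rb X Y Z W
      + b * (S Y Z * ⟪X, W⟫ - S X Z * ⟪Y, W⟫
             + ⟪Y, Z⟫ * S X W - ⟪X, Z⟫ * S Y W)
      - (r / n) * (a / ((n : ℝ) - 1) + 2 * b)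
        * (⟪Y, Z⟫ * ⟪X, W⟫ - ⟪X, Z⟫ * ⟪Y, W⟫))
    (ha : a ≠ 0)
    (hflat : ∀ X Y Z W : V, Cs X Y Z W = 0) :
    ∀ X Y Z W : V, Rb X Y Z W =
      (r / n) * (1 / ((n : ℝ) - 1) + 2 * b / a)
        * (⟪Y, Z⟫ * ⟪X, W⟫ - ⟪X, Z⟫ * ⟪Y, W⟫)
      + ⟪X, W⟫ * (-(b / a) * S Y Z) - ⟪X, Z⟫ * (-(b / a) * S Y W)
      + ⟪Y, Z⟫ * (-(b / a) * S X W) - ⟪Y, W⟫ * (-(b / a) * S X Z) := by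
  intro X Y Z W
  have hCs := (hC X Y Z W).symm.trans (hflat X Y Z W)
  field_simp
  linear_combination hCs

theorem stmt2
    {V : Type*} [NormedAddCommGroup V] [InnerProductSpace ℝ V]
    (n : ℕ) (hn : 3 < n)
    (e : Module.Basis (Fin n) ℝ V) (he : Orthonormal ℝ e)
    (Rb : V → V → V → V → ℝ)
    (hlin1 : ∀ (c : ℝ) (X X' Y Z W : V),
      Rb (c • X + X') Y Z W = c * Rb X Y Z W + Rb X' Y Z W)
    (hlin2 : ∀ (c : ℝ) (X Y Y' Z W : V),
      Rb X (c • Y + Y') Z W = c * Rb X Y Z W + Rb X Y' Z W)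
    (hlin3 : ∀ (c : ℝ) (X Y Z Z' W : V),
      Rb X Y (c • Z + Z') W = c * Rb X Y Z W + Rb X Y Z' W)
    (hlin4 : ∀ (c : ℝ) (X Y Z W W' : V),
      Rb X Y Z (c • W + W') = c * Rb X Y Z W + Rb X Y Z W')
    (hskew1 : ∀ X Y Z W : V, Rb X Y Z W = - Rb Y X Z W)
    (hskew2 : ∀ X Y Z W : V, Rb X Y Z W = - Rb X Y W Z)
    (hpair : ∀ X Y Z W : V, Rb X Y Z W = Rb Z W X Y)
    (S : V → V → ℝ) (hS : ∀ Y Z : V, S Y Z = ∑ i, Rb (e i) Y Z (e i))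
    (r : ℝ) (hr : r = ∑ i, S (e i) (e i))
    (a b : ℝ)
    (Cs : V → V → V → V → ℝ)
    (hC : ∀ X Y Z W : V, Cs X Y Z W =
      a * Rb X Y Z W
      + b * (S Y Z * ⟪X, W⟫ - S X Z * ⟪Y, W⟫
             + ⟪Y, Z⟫ * S X W - ⟪X, Z⟫ * S Y W)
      - (r / n) * (a / ((n : ℝ) - 1) + 2 * b)
        * (⟪Y, Z⟫ * ⟪X, W⟫ - ⟪X, Z⟫ * ⟪Y, W⟫))
    (ha : a ≠ 0)
    (hflat : ∀ X Y Z W : V, Cs X Y Z W = 0) :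
    ∀ X Y Z W : V, Rb X Y Z W =
      (r / n) * (1 / ((n : ℝ) - 1) + 2 * b / a)
        * (⟪Y, Z⟫ * ⟪X, W⟫ - ⟪X, Z⟫ * ⟪Y, W⟫)
      + ⟪X, W⟫ * (-(b / a) * S Y Z) - ⟪X, Z⟫ * (-(b / a) * S Y W)
      + ⟪Y, Z⟫ * (-(b / a) * S X W) - ⟪Y, W⟫ * (-(b / a) * S X Z) :=
  stmt2_general n Rb S r a b Cs hC ha hflat
end

section
/- Let S be a symmetric bilinear form on V, Q the associated self-adjoint operator with g(QX,Y) = S(X,Y), and r a real scalar. Let T be a nonzero linear functional on V with Riesz vector ρ, i.e. T(X) = g(X,ρ) for all X. Suppose (i) T(Z)S(X,U) − T(U)S(X,Z) = 0 for all X,Z,U ∈ V, (ii) T(QX) = r T(X) for all X ∈ V, and (iii) r ≠ 0. Then T(ρ) ≠ 0 and S(X,Z) = (r / T(ρ)) T(X) T(Z) for all X,Z ∈ V; in particular, S is of the quasi-Einstein form S = p g + q T⊗T with p = 0 and q = r/T(ρ) ≠ 0. -/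
open scoped RealInnerProductSpace

theorem stmt8
    {V : Type*} [NormedAddCommGroup V] [InnerProductSpace ℝ V]
    (n : ℕ) (hn : 3 < n) (hdim : Module.finrank ℝ V = n)
    (S : V → V → ℝ) (hSsymm : ∀ X Y : V, S X Y = S Y X)
    (Q : V →ₗ[ℝ] V) (hQ : ∀ X Y : V, ⟪Q X, Y⟫ = S X Y)
    (r : ℝ)
    (T : V →ₗ[ℝ] ℝ) (hT : T ≠ 0) (ρ : V) (hρ : ∀ X : V, T X = ⟪X, ρ⟫)
    (hTS : ∀ X Z U : V, T Z * S X U - T U * S X Z = 0)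
    (hTQ : ∀ X : V, T (Q X) = r * T X)
    (hrne : r ≠ 0) :
    T ρ ≠ 0 ∧ (∀ X Z : V, S X Z = (r / T ρ) * T X * T Z) ∧ r / T ρ ≠ 0 := by
  have hρne : ρ ≠ 0 := by
    intro h
    apply hT
    ext X
    simp [hρ X, h]
  have hTρ : T ρ ≠ 0 := by
    rw [hρ ρ]
    exact inner_self_ne_zero.mpr hρne
  refine ⟨hTρ, ?_, div_ne_zero hrne hTρ⟩
  intro X Z
  have h1 := hTS X Z ρ
  have h2 : S X ρ = r * T X := by
    rw [← hQ X ρ, ← hρ (Q X), hTQ X]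
  rw [h2] at h1
  field_simp
  linarith [h1]
end

section
/- Suppose C*(X,Y,Z,W) = 0 for all X,Y,Z,W ∈ V with a ≠ 0, and suppose r ≠ 0. Let T be a nonzero linear functional on V with Riesz vector ρ (T(X) = g(X,ρ)) such that T(Z)S(X,U) − T(U)S(X,Z) = 0 for all X,Z,U ∈ V and T(QX) = r T(X) for all X ∈ V. Then T(ρ) ≠ 0 and the Ricci tensor satisfies S(X,Z) = (r/T(ρ)) T(X) T(Z) for all X,Z ∈ V; in particular, S is of the quasi-Einstein form S = p g + q T⊗T with p = 0 and q = r/T(ρ) ≠ 0. (This is the pointwise content of: a quasi-conformally flat weakly Ricci symmetric manifold of dimension n > 3 with non-vanishing scalar curvature is a quasi-Einstein manifold with respect to the 1-form T.) -/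
/-!
Taking `Z = ρ` in `T(Z) S(X,U) = T(U) S(X,Z)` and using `S(X,ρ) = T(QX) = r T(X)` gives
`T(ρ) S(X,U) = r T(X) T(U)`. At `X = U = z` with `T z ≠ 0` the right side is nonzero, so
`T(ρ) ≠ 0`, and dividing by it yields the quasi-Einstein form.
-/

open scoped RealInnerProductSpace

lemma apply_riesz_eq_of_inner_eq {V : Type*} [NormedAddCommGroup V] [InnerProductSpace ℝ V]
    {S : V → V → ℝ} {Q : V → V} (hQ : ∀ X Y, ⟪Q X, Y⟫ = S X Y)
    {T : V → ℝ} {ρ : V} (hρ : ∀ X, T X = ⟪X, ρ⟫) (X : V) :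
    S X ρ = T (Q X) := by
  rw [← hQ, hρ]

section

variable {V : Type*} {S : V → V → ℝ} {T : V → ℝ} {ρ : V} {r : ℝ}

lemma mul_eq_mul_mul_of_cross_eq (hTS : ∀ X Z U, T Z * S X U - T U * S X Z = 0)
    (hSρ : ∀ X, S X ρ = r * T X) (X U : V) :
    T ρ * S X U = r * T X * T U := by
  linear_combination hTS X ρ U + T U * hSρ X

lemma ne_zero_of_mul_eq_mul_mul (hr : r ≠ 0) {z : V} (hz : T z ≠ 0)
    (h : ∀ X U, T ρ * S X U = r * T X * T U) : T ρ ≠ 0 := by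
  intro h0
  have hzz := h z z
  rw [h0, zero_mul] at hzz
  exact mul_ne_zero (mul_ne_zero hr hz) hz hzz.symm

end

theorem stmt9_general
    {V : Type*} [NormedAddCommGroup V] [InnerProductSpace ℝ V]
    (S : V → V → ℝ)
    (r : ℝ)
    (hrne : r ≠ 0)
    (Q : V →ₗ[ℝ] V) (hQ : ∀ X Y : V, ⟪Q X, Y⟫ = S X Y)
    (T : V →ₗ[ℝ] ℝ) (hT : T ≠ 0) (ρ : V) (hρ : ∀ X : V, T X = ⟪X, ρ⟫)
    (hTS : ∀ X Z U : V, T Z * S X U - T U * S X Z = 0)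
    (hTQ : ∀ X : V, T (Q X) = r * T X)
 :
    T ρ ≠ 0 ∧ (∀ X Z : V, S X Z = (r / T ρ) * T X * T Z) ∧ r / T ρ ≠ 0 := by
  obtain ⟨z, hz⟩ := DFunLike.ne_iff.mp hT
  have hSρ (X : V) : S X ρ = r * T X := by
    rw [apply_riesz_eq_of_inner_eq hQ hρ, hTQ]
  have key := mul_eq_mul_mul_of_cross_eq hTS hSρ
  have hTρ : T ρ ≠ 0 := ne_zero_of_mul_eq_mul_mul hrne hz key
  refine ⟨hTρ, fun X Z => ?_, div_ne_zero hrne hTρ⟩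
  field_simp
  linear_combination key X Z

theorem stmt9
    {V : Type*} [NormedAddCommGroup V] [InnerProductSpace ℝ V]
    (n : ℕ) (hn : 3 < n)
    (e : Module.Basis (Fin n) ℝ V) (he : Orthonormal ℝ e)
    (Rb : V → V → V → V → ℝ)
    (hlin1 : ∀ (c : ℝ) (X X' Y Z W : V),
      Rb (c • X + X') Y Z W = c * Rb X Y Z W + Rb X' Y Z W)
    (hlin2 : ∀ (c : ℝ) (X Y Y' Z W : V),
      Rb X (c • Y + Y') Z W = c * Rb X Y Z W + Rb X Y' Z W)
    (hlin3 : ∀ (c : ℝ) (X Y Z Z' W : V),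
      Rb X Y (c • Z + Z') W = c * Rb X Y Z W + Rb X Y Z' W)
    (hlin4 : ∀ (c : ℝ) (X Y Z W W' : V),
      Rb X Y Z (c • W + W') = c * Rb X Y Z W + Rb X Y Z W')
    (hskew1 : ∀ X Y Z W : V, Rb X Y Z W = - Rb Y X Z W)
    (hskew2 : ∀ X Y Z W : V, Rb X Y Z W = - Rb X Y W Z)
    (hpair : ∀ X Y Z W : V, Rb X Y Z W = Rb Z W X Y)
    (S : V → V → ℝ) (hS : ∀ Y Z : V, S Y Z = ∑ i, Rb (e i) Y Z (e i))
    (r : ℝ) (hr : r = ∑ i, S (e i) (e i))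
    (a b : ℝ)
    (Cs : V → V → V → V → ℝ)
    (hC : ∀ X Y Z W : V, Cs X Y Z W =
      a * Rb X Y Z W
      + b * (S Y Z * ⟪X, W⟫ - S X Z * ⟪Y, W⟫
             + ⟪Y, Z⟫ * S X W - ⟪X, Z⟫ * S Y W)
      - (r / n) * (a / ((n : ℝ) - 1) + 2 * b)
        * (⟪Y, Z⟫ * ⟪X, W⟫ - ⟪X, Z⟫ * ⟪Y, W⟫))
    (ha : a ≠ 0)
    (hflat : ∀ X Y Z W : V, Cs X Y Z W = 0)
    (hrne : r ≠ 0)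
    (Q : V →ₗ[ℝ] V) (hQ : ∀ X Y : V, ⟪Q X, Y⟫ = S X Y)
    (T : V →ₗ[ℝ] ℝ) (hT : T ≠ 0) (ρ : V) (hρ : ∀ X : V, T X = ⟪X, ρ⟫)
    (hTS : ∀ X Z U : V, T Z * S X U - T U * S X Z = 0)
    (hTQ : ∀ X : V, T (Q X) = r * T X)
 :
    T ρ ≠ 0 ∧ (∀ X Z : V, S X Z = (r / T ρ) * T X * T Z) ∧ r / T ρ ≠ 0 :=
  stmt9_general S r hrne Q hQ T hT ρ hρ hTS hTQ
end

section
/- Suppose C*(X,Y,Z,W) = 0 for all X,Y,Z,W ∈ V with a ≠ 0, and suppose the Ricci tensor has the form S(X,Z) = α̃ T(X)T(Z) for all X,Z ∈ V, where α̃ is a scalar and T is a linear functional on V. Then R̄ is of quasi-constant curvature form: R̄(X,Y,Z,W) = l[g(Y,Z)g(X,W) − g(X,Z)g(Y,W)] + δ[g(X,W)T(Y)T(Z) − g(X,Z)T(Y)T(W) + g(Y,Z)T(X)T(W) − g(Y,W)T(X)T(Z)] for all X,Y,Z,W ∈ V, where l = (r/n)(1/(n−1) + 2b/a) and δ = −(b/a)α̃.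 -/
/-!
Since `a ≠ 0`, the vanishing of `C*` can be solved for `R̄`: it is a multiple of the unit
constant-curvature tensor plus `-(b/a)` times the Kulkarni–Nomizu product of `S` with `g`.
The Kulkarni–Nomizu product is linear in `S`, so for `S = α̃ T ⊗ T` the second term is
`-(b/a) α̃` times the product of `T ⊗ T` with `g`, which is the quasi-constant curvature form.
-/

open scoped RealInnerProductSpace

section QuasiConformal

variable {V : Type*} [NormedAddCommGroup V] [InnerProductSpace ℝ V]

def unitCurvature (X Y Z W : V) : ℝ :=
  ⟪Y, Z⟫ * ⟪X, W⟫ - ⟪X, Z⟫ * ⟪Y, W⟫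

def kulkarniNomizuInner (h : V → V → ℝ) (X Y Z W : V) : ℝ :=
  h Y Z * ⟪X, W⟫ - h X Z * ⟪Y, W⟫ + ⟪Y, Z⟫ * h X W - ⟪X, Z⟫ * h Y W

noncomputable def quasiConformal (a b : ℝ) (n : ℕ) (r : ℝ) (R : V → V → V → V → ℝ)
    (S : V → V → ℝ) (X Y Z W : V) : ℝ :=
  a * R X Y Z W + b * kulkarniNomizuInner S X Y Z W
    - (r / n) * (a / ((n : ℝ) - 1) + 2 * b) * unitCurvature X Y Z W

theorem kulkarniNomizuInner_of_eq_mul_mul {h : V → V → ℝ} {α : ℝ} {T : V → ℝ}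
    (hh : ∀ X Z, h X Z = α * T X * T Z) (X Y Z W : V) :
    kulkarniNomizuInner h X Y Z W
      = α * kulkarniNomizuInner (fun U U' => T U * T U') X Y Z W := by
  simp only [kulkarniNomizuInner, hh]
  ring

theorem quasiConformal_eq_zero_iff {a : ℝ} (ha : a ≠ 0) (b : ℝ) (n : ℕ) (r : ℝ)
    (R : V → V → V → V → ℝ) (S : V → V → ℝ) (X Y Z W : V) :
    quasiConformal a b n r R S X Y Z W = 0 ↔
      R X Y Z W = (r / n) * (1 / ((n : ℝ) - 1) + 2 * b / a) * unitCurvature X Y Z W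
        - b / a * kulkarniNomizuInner S X Y Z W := by
  unfold quasiConformal
  constructor <;> intro h
  · field_simp
    linear_combination h
  · rw [h]
    field_simp
    ring

end QuasiConformal

theorem stmt10_general
    {V : Type*} [NormedAddCommGroup V] [InnerProductSpace ℝ V]
    (n : ℕ)
    (Rb : V → V → V → V → ℝ)
    (S : V → V → ℝ)
    (r : ℝ)
    (a b : ℝ)
    (Cs : V → V → V → V → ℝ)
    (hC : ∀ X Y Z W : V, Cs X Y Z W =
      a * Rb X Y Z W
      + b * (S Y Z * ⟪X, W⟫ - S X Z * ⟪Y, W⟫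
             + ⟪Y, Z⟫ * S X W - ⟪X, Z⟫ * S Y W)
      - (r / n) * (a / ((n : ℝ) - 1) + 2 * b)
        * (⟪Y, Z⟫ * ⟪X, W⟫ - ⟪X, Z⟫ * ⟪Y, W⟫))
    (ha : a ≠ 0)
    (hflat : ∀ X Y Z W : V, Cs X Y Z W = 0)
    (T : V →ₗ[ℝ] ℝ) (αt : ℝ)
    (hRic : ∀ X Z : V, S X Z = αt * T X * T Z) :
    ∀ X Y Z W : V, Rb X Y Z W =
      (r / n) * (1 / ((n : ℝ) - 1) + 2 * b / a)
        * (⟪Y, Z⟫ * ⟪X, W⟫ - ⟪X, Z⟫ * ⟪Y, W⟫)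
      + (-(b / a) * αt)
        * (⟪X, W⟫ * T Y * T Z - ⟪X, Z⟫ * T Y * T W
           + ⟪Y, Z⟫ * T X * T W - ⟪Y, W⟫ * T X * T Z) := by
  intro X Y Z W
  have hCs : quasiConformal a b n r Rb S X Y Z W = 0 := (hC X Y Z W).symm.trans (hflat X Y Z W)
  rw [quasiConformal_eq_zero_iff ha, kulkarniNomizuInner_of_eq_mul_mul hRic] at hCs
  rw [hCs]
  simp only [unitCurvature, kulkarniNomizuInner]
  ring

theorem stmt10
    {V : Type*} [NormedAddCommGroup V] [InnerProductSpace ℝ V]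
    (n : ℕ) (hn : 3 < n)
    (e : Module.Basis (Fin n) ℝ V) (he : Orthonormal ℝ e)
    (Rb : V → V → V → V → ℝ)
    (hlin1 : ∀ (c : ℝ) (X X' Y Z W : V),
      Rb (c • X + X') Y Z W = c * Rb X Y Z W + Rb X' Y Z W)
    (hlin2 : ∀ (c : ℝ) (X Y Y' Z W : V),
      Rb X (c • Y + Y') Z W = c * Rb X Y Z W + Rb X Y' Z W)
    (hlin3 : ∀ (c : ℝ) (X Y Z Z' W : V),
      Rb X Y (c • Z + Z') W = c * Rb X Y Z W + Rb X Y Z' W)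
    (hlin4 : ∀ (c : ℝ) (X Y Z W W' : V),
      Rb X Y Z (c • W + W') = c * Rb X Y Z W + Rb X Y Z W')
    (hskew1 : ∀ X Y Z W : V, Rb X Y Z W = - Rb Y X Z W)
    (hskew2 : ∀ X Y Z W : V, Rb X Y Z W = - Rb X Y W Z)
    (hpair : ∀ X Y Z W : V, Rb X Y Z W = Rb Z W X Y)
    (S : V → V → ℝ) (hS : ∀ Y Z : V, S Y Z = ∑ i, Rb (e i) Y Z (e i))
    (r : ℝ) (hr : r = ∑ i, S (e i) (e i))
    (a b : ℝ)
    (Cs : V → V → V → V → ℝ)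
    (hC : ∀ X Y Z W : V, Cs X Y Z W =
      a * Rb X Y Z W
      + b * (S Y Z * ⟪X, W⟫ - S X Z * ⟪Y, W⟫
             + ⟪Y, Z⟫ * S X W - ⟪X, Z⟫ * S Y W)
      - (r / n) * (a / ((n : ℝ) - 1) + 2 * b)
        * (⟪Y, Z⟫ * ⟪X, W⟫ - ⟪X, Z⟫ * ⟪Y, W⟫))
    (ha : a ≠ 0)
    (hflat : ∀ X Y Z W : V, Cs X Y Z W = 0)
    (T : V →ₗ[ℝ] ℝ) (αt : ℝ)
    (hRic : ∀ X Z : V, S X Z = αt * T X * T Z) :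
    ∀ X Y Z W : V, Rb X Y Z W =
      (r / n) * (1 / ((n : ℝ) - 1) + 2 * b / a)
        * (⟪Y, Z⟫ * ⟪X, W⟫ - ⟪X, Z⟫ * ⟪Y, W⟫)
      + (-(b / a) * αt)
        * (⟪X, W⟫ * T Y * T Z - ⟪X, Z⟫ * T Y * T W
           + ⟪Y, Z⟫ * T X * T W - ⟪Y, W⟫ * T X * T Z) :=
  stmt10_general n Rb S r a b Cs hC ha hflat T αt hRic
end

section
/- Let B and D be linear functionals on V and set T := B − D. Suppose C*(X,Y,Z,W) = 0 for all X,Y,Z,W ∈ V with a ≠ 0, and suppose S(X,Z) = α̃ T(X)T(Z) for all X,Z ∈ V for some scalar α̃. Then, with l = (r/n)(1/(n−1) + 2b/a), δ = −(b/a)α̃, and the bilinear form {δBD} := δ(B⊗B − B⊗D − D⊗B + D⊗D), one has R̄(X,Y,Z,W) = l[g(Y,Z)g(X,W) − g(X,Z)g(Y,W)] + g(X,W){δBD}(Y,Z) − g(X,Z){δBD}(Y,W) + g(Y,Z){δBD}(X,W) − g(Y,W){δBD}(X,Z) for all X,Y,Z,W ∈ V; i.e. R̄ is of hyper quasi-constant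 curvature form. -/
/-!
The quasi-conformal tensor is `a • R̄` plus terms built from `S`, `g` and `r`, so for `a ≠ 0`
the equation `C* = 0` can be solved for `R̄` at each `X Y Z W`; substituting
`S = α̃ T ⊗ T` with `T = B - D` then gives the hyper quasi-constant form with `P = {δBD}`.
-/

open scoped RealInnerProductSpace

lemma LinearMap.sub_apply_mul_sub_apply {R M : Type*} [CommRing R] [AddCommGroup M] [Module R M]
    (B D : M →ₗ[R] R) (Y Z : M) :
    (B - D) Y * (B - D) Z = B Y * B Z - B Y * D Z - D Y * B Z + D Y * D Z := by
  simp only [LinearMap.sub_apply]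
  ring

section QuasiConformal

variable {V : Type*} [NormedAddCommGroup V] [InnerProductSpace ℝ V]

lemma curvature_eq_of_quasiConformal_eq_zero (R : V → V → V → V → ℝ) (S : V → V → ℝ)
    (n r a b : ℝ) (ha : a ≠ 0) (X Y Z W : V)
    (hC : a * R X Y Z W
      + b * (S Y Z * ⟪X, W⟫ - S X Z * ⟪Y, W⟫ + ⟪Y, Z⟫ * S X W - ⟪X, Z⟫ * S Y W)
      - (r / n) * (a / (n - 1) + 2 * b) * (⟪Y, Z⟫ * ⟪X, W⟫ - ⟪X, Z⟫ * ⟪Y, W⟫) = 0) :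
    R X Y Z W = (r / n) * (1 / (n - 1) + 2 * b / a) * (⟪Y, Z⟫ * ⟪X, W⟫ - ⟪X, Z⟫ * ⟪Y, W⟫)
      - (b / a) * (S Y Z * ⟪X, W⟫ - S X Z * ⟪Y, W⟫ + ⟪Y, Z⟫ * S X W - ⟪X, Z⟫ * S Y W) := by
  refine mul_left_cancel₀ ha ?_
  field_simp
  linear_combination hC

end QuasiConformal

theorem stmt11_general
    {V : Type*} [NormedAddCommGroup V] [InnerProductSpace ℝ V]
    (n : ℕ)
    (Rb : V → V → V → V → ℝ)
    (S : V → V → ℝ)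
    (r : ℝ)
    (a b : ℝ)
    (Cs : V → V → V → V → ℝ)
    (hC : ∀ X Y Z W : V, Cs X Y Z W =
      a * Rb X Y Z W
      + b * (S Y Z * ⟪X, W⟫ - S X Z * ⟪Y, W⟫
             + ⟪Y, Z⟫ * S X W - ⟪X, Z⟫ * S Y W)
      - (r / n) * (a / ((n : ℝ) - 1) + 2 * b)
        * (⟪Y, Z⟫ * ⟪X, W⟫ - ⟪X, Z⟫ * ⟪Y, W⟫))
    (ha : a ≠ 0)
    (hflat : ∀ X Y Z W : V, Cs X Y Z W = 0)
    (B D : V →ₗ[ℝ] ℝ) (T : V →ₗ[ℝ] ℝ) (hTdef : T = B - D)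
    (αt : ℝ)
    (hRic : ∀ X Z : V, S X Z = αt * T X * T Z) :
    ∀ X Y Z W : V,
      Rb X Y Z W =
        (r / n) * (1 / ((n : ℝ) - 1) + 2 * b / a)
          * (⟪Y, Z⟫ * ⟪X, W⟫ - ⟪X, Z⟫ * ⟪Y, W⟫)
        + ⟪X, W⟫ * ((-(b / a) * αt)
            * (B Y * B Z - B Y * D Z - D Y * B Z + D Y * D Z))
        - ⟪X, Z⟫ * ((-(b / a) * αt)
            * (B Y * B W - B Y * D W - D Y * B W + D Y * D W))
        + ⟪Y, Z⟫ * ((-(b / a) * αt)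
            * (B X * B W - B X * D W - D X * B W + D X * D W))
        - ⟪Y, W⟫ * ((-(b / a) * αt)
            * (B X * B Z - B X * D Z - D X * B Z + D X * D Z)) := by
  intro X Y Z W
  have hR := curvature_eq_of_quasiConformal_eq_zero Rb S n r a b ha X Y Z W
    ((hC X Y Z W).symm.trans (hflat X Y Z W))
  simp only [hRic, hTdef, mul_assoc, LinearMap.sub_apply_mul_sub_apply] at hR
  rw [hR]
  ring

theorem stmt11
    {V : Type*} [NormedAddCommGroup V] [InnerProductSpace ℝ V]
    (n : ℕ) (hn : 3 < n)
    (e : Module.Basis (Fin n) ℝ V) (he : Orthonormal ℝ e)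
    (Rb : V → V → V → V → ℝ)
    (hlin1 : ∀ (c : ℝ) (X X' Y Z W : V),
      Rb (c • X + X') Y Z W = c * Rb X Y Z W + Rb X' Y Z W)
    (hlin2 : ∀ (c : ℝ) (X Y Y' Z W : V),
      Rb X (c • Y + Y') Z W = c * Rb X Y Z W + Rb X Y' Z W)
    (hlin3 : ∀ (c : ℝ) (X Y Z Z' W : V),
      Rb X Y (c • Z + Z') W = c * Rb X Y Z W + Rb X Y Z' W)
    (hlin4 : ∀ (c : ℝ) (X Y Z W W' : V),
      Rb X Y Z (c • W + W') = c * Rb X Y Z W + Rb X Y Z W')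
    (hskew1 : ∀ X Y Z W : V, Rb X Y Z W = - Rb Y X Z W)
    (hskew2 : ∀ X Y Z W : V, Rb X Y Z W = - Rb X Y W Z)
    (hpair : ∀ X Y Z W : V, Rb X Y Z W = Rb Z W X Y)
    (S : V → V → ℝ) (hS : ∀ Y Z : V, S Y Z = ∑ i, Rb (e i) Y Z (e i))
    (r : ℝ) (hr : r = ∑ i, S (e i) (e i))
    (a b : ℝ)
    (Cs : V → V → V → V → ℝ)
    (hC : ∀ X Y Z W : V, Cs X Y Z W =
      a * Rb X Y Z W
      + b * (S Y Z * ⟪X, W⟫ - S X Z * ⟪Y, W⟫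
             + ⟪Y, Z⟫ * S X W - ⟪X, Z⟫ * S Y W)
      - (r / n) * (a / ((n : ℝ) - 1) + 2 * b)
        * (⟪Y, Z⟫ * ⟪X, W⟫ - ⟪X, Z⟫ * ⟪Y, W⟫))
    (ha : a ≠ 0)
    (hflat : ∀ X Y Z W : V, Cs X Y Z W = 0)
    (B D : V →ₗ[ℝ] ℝ) (T : V →ₗ[ℝ] ℝ) (hTdef : T = B - D)
    (αt : ℝ)
    (hRic : ∀ X Z : V, S X Z = αt * T X * T Z) :
    ∀ X Y Z W : V,
      Rb X Y Z W =
        (r / n) * (1 / ((n : ℝ) - 1) + 2 * b / a)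
          * (⟪Y, Z⟫ * ⟪X, W⟫ - ⟪X, Z⟫ * ⟪Y, W⟫)
        + ⟪X, W⟫ * ((-(b / a) * αt)
            * (B Y * B Z - B Y * D Z - D Y * B Z + D Y * D Z))
        - ⟪X, Z⟫ * ((-(b / a) * αt)
            * (B Y * B W - B Y * D W - D Y * B W + D Y * D W))
        + ⟪Y, Z⟫ * ((-(b / a) * αt)
            * (B X * B W - B X * D W - D X * B W + D X * D W))
        - ⟪Y, W⟫ * ((-(b / a) * αt)
            * (B X * B Z - B X * D Z - D X * B Z + D X * D Z)) :=
  stmt11_general n Rb S r a b Cs hC ha hflat B D T hTdef αt hRic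
end

section
/- Let B and D be linear functionals on V and set T := B − D. Suppose P̄(X,Y,Z,W) = 0 for all X,Y,Z,W ∈ V with a ≠ 0, and suppose S(X,Z) = α̃₁ T(X)T(Z) for all X,Z ∈ V for some scalar α̃₁. Then, with γ₁ = (r/(an))(a/(n−1) + b), δ₁ = −(b/a)α̃₁, and the bilinear form {δ₁BD} := δ₁(B⊗B − B⊗D − D⊗B + D⊗D), one has R̄(X,Y,Z,W) = γ₁[g(Y,Z)g(X,W) − g(X,Z)g(Y,W)] + {δ₁BD}(Y,Z)g(X,W) − {δ₁BD}(X,Z)g(Y,W) for all X,Y,Z,W ∈ V; i.e. R̄ is of pseudo quasi-constant curvature form. -/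
open scoped RealInnerProductSpace

def pseudoQuasiConstCurvature {V : Type*} [NormedAddCommGroup V] [InnerProductSpace ℝ V]
    (α : ℝ) (P : V → V → ℝ) (X Y Z W : V) : ℝ :=
  α * (⟪Y, Z⟫ * ⟪X, W⟫ - ⟪X, Z⟫ * ⟪Y, W⟫) + P Y Z * ⟪X, W⟫ - P X Z * ⟪Y, W⟫

theorem eq_pseudoQuasiConstCurvature_of_pseudoProjective_eq_zero
    {V : Type*} [NormedAddCommGroup V] [InnerProductSpace ℝ V]
    (R : V → V → V → V → ℝ) (S : V → V → ℝ) {a : ℝ} (b c : ℝ) (ha : a ≠ 0)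
    (h : ∀ X Y Z W : V, a * R X Y Z W + b * (S Y Z * ⟪X, W⟫ - S X Z * ⟪Y, W⟫)
      - c * (⟪Y, Z⟫ * ⟪X, W⟫ - ⟪X, Z⟫ * ⟪Y, W⟫) = 0)
    (X Y Z W : V) :
    R X Y Z W = pseudoQuasiConstCurvature (c / a) (fun Y Z => -(b / a) * S Y Z) X Y Z W := by
  unfold pseudoQuasiConstCurvature
  field_simp
  linear_combination h X Y Z W

theorem stmt13_general
    {V : Type*} [NormedAddCommGroup V] [InnerProductSpace ℝ V]
    (n : ℕ)
    (Rb : V → V → V → V → ℝ)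
    (S : V → V → ℝ)
    (r : ℝ)
    (a b : ℝ)
    (Pb : V → V → V → V → ℝ)
    (hP : ∀ X Y Z W : V, Pb X Y Z W =
      a * Rb X Y Z W
      + b * (S Y Z * ⟪X, W⟫ - S X Z * ⟪Y, W⟫)
      - (r / n) * (a / ((n : ℝ) - 1) + b)
        * (⟪Y, Z⟫ * ⟪X, W⟫ - ⟪X, Z⟫ * ⟪Y, W⟫))
    (ha : a ≠ 0)
    (hflat : ∀ X Y Z W : V, Pb X Y Z W = 0)
    (B D : V →ₗ[ℝ] ℝ) (T : V →ₗ[ℝ] ℝ) (hTdef : T = B - D)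
    (αt : ℝ)
    (hRic : ∀ X Z : V, S X Z = αt * T X * T Z) :
    ∀ X Y Z W : V,
      Rb X Y Z W =
        (r / (a * n)) * (a / ((n : ℝ) - 1) + b)
          * (⟪Y, Z⟫ * ⟪X, W⟫ - ⟪X, Z⟫ * ⟪Y, W⟫)
        + ((-(b / a) * αt)
            * (B Y * B Z - B Y * D Z - D Y * B Z + D Y * D Z)) * ⟪X, W⟫
        - ((-(b / a) * αt)
            * (B X * B Z - B X * D Z - D X * B Z + D X * D Z)) * ⟪Y, W⟫ := by
  intro X Y Z W
  have hPQ := eq_pseudoQuasiConstCurvature_of_pseudoProjective_eq_zero Rb S b _ ha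
    (fun X Y Z W => (hP X Y Z W).symm.trans (hflat X Y Z W)) X Y Z W
  have hγ : r / n * (a / ((n : ℝ) - 1) + b) / a = r / (a * n) * (a / ((n : ℝ) - 1) + b) := by
    ring
  rw [hPQ, hγ, pseudoQuasiConstCurvature]
  simp only [hRic, hTdef, LinearMap.sub_apply]
  ring

theorem stmt13
    {V : Type*} [NormedAddCommGroup V] [InnerProductSpace ℝ V]
    (n : ℕ) (hn : 3 < n)
    (e : Module.Basis (Fin n) ℝ V) (he : Orthonormal ℝ e)
    (Rb : V → V → V → V → ℝ)
    (hlin1 : ∀ (c : ℝ) (X X' Y Z W : V),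
      Rb (c • X + X') Y Z W = c * Rb X Y Z W + Rb X' Y Z W)
    (hlin2 : ∀ (c : ℝ) (X Y Y' Z W : V),
      Rb X (c • Y + Y') Z W = c * Rb X Y Z W + Rb X Y' Z W)
    (hlin3 : ∀ (c : ℝ) (X Y Z Z' W : V),
      Rb X Y (c • Z + Z') W = c * Rb X Y Z W + Rb X Y Z' W)
    (hlin4 : ∀ (c : ℝ) (X Y Z W W' : V),
      Rb X Y Z (c • W + W') = c * Rb X Y Z W + Rb X Y Z W')
    (hskew1 : ∀ X Y Z W : V, Rb X Y Z W = - Rb Y X Z W)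
    (hskew2 : ∀ X Y Z W : V, Rb X Y Z W = - Rb X Y W Z)
    (hpair : ∀ X Y Z W : V, Rb X Y Z W = Rb Z W X Y)
    (S : V → V → ℝ) (hS : ∀ Y Z : V, S Y Z = ∑ i, Rb (e i) Y Z (e i))
    (r : ℝ) (hr : r = ∑ i, S (e i) (e i))
    (a b : ℝ)
    (Pb : V → V → V → V → ℝ)
    (hP : ∀ X Y Z W : V, Pb X Y Z W =
      a * Rb X Y Z W
      + b * (S Y Z * ⟪X, W⟫ - S X Z * ⟪Y, W⟫)
      - (r / n) * (a / ((n : ℝ) - 1) + b)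
        * (⟪Y, Z⟫ * ⟪X, W⟫ - ⟪X, Z⟫ * ⟪Y, W⟫))
    (ha : a ≠ 0)
    (hflat : ∀ X Y Z W : V, Pb X Y Z W = 0)
    (B D : V →ₗ[ℝ] ℝ) (T : V →ₗ[ℝ] ℝ) (hTdef : T = B - D)
    (αt : ℝ)
    (hRic : ∀ X Z : V, S X Z = αt * T X * T Z) :
    ∀ X Y Z W : V,
      Rb X Y Z W =
        (r / (a * n)) * (a / ((n : ℝ) - 1) + b)
          * (⟪Y, Z⟫ * ⟪X, W⟫ - ⟪X, Z⟫ * ⟪Y, W⟫)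
        + ((-(b / a) * αt)
            * (B Y * B Z - B Y * D Z - D Y * B Z + D Y * D Z)) * ⟪X, W⟫
        - ((-(b / a) * αt)
            * (B X * B Z - B X * D Z - D X * B Z + D X * D Z)) * ⟪Y, W⟫ :=
  stmt13_general n Rb S r a b Pb hP ha hflat B D T hTdef αt hRic
end

section
/- Suppose P̄(X,Y,Z,W) = 0 for all X,Y,Z,W ∈ V with a ≠ 0, b ≠ 0 and a + (n−1)b ≠ 0. Then R̄ has constant sectional-curvature form: R̄(X,Y,Z,W) = (r/(n(n−1)))[g(Y,Z)g(X,W) − g(X,Z)g(Y,W)] for all X,Y,Z,W ∈ V. -/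
open scoped RealInnerProductSpace

/-!
Contracting `P̄ = 0` over the first and last slots gives `(a + (n-1)b)(S - (r/n) g) = 0`, so `R̄`
is Einstein with `S = (r/n) g`. Substituting this back, the Ricci terms of `P̄` collapse and
`P̄ = a (R̄ - r/(n(n-1)) R₁)`, where `R₁` is the curvature tensor of the unit sphere; `a ≠ 0` ends it.
-/

theorem IsLinearMap.of_smul_add {R M M₂ : Type*} [Ring R] [AddCommGroup M] [AddCommGroup M₂]
    [Module R M] [Module R M₂] {f : M → M₂} (h : ∀ (c : R) x y, f (c • x + y) = c • f x + f y) :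
    IsLinearMap R f := by
  have f_zero : f 0 = 0 := by simpa using h 1 0 0
  exact ⟨fun x y => by simpa using h 1 x y, fun c x => by simpa [f_zero] using h c x 0⟩

section Curvature

variable {V : Type*} [NormedAddCommGroup V] [InnerProductSpace ℝ V] {n : ℕ}

/-- The curvature tensor of the unit sphere, in the sign convention where the Ricci tensor is
`S(Y,Z) = ∑ᵢ R(eᵢ,Y,Z,eᵢ)`. -/
def unitCurvatureTensor (X Y Z W : V) : ℝ := ⟪Y, Z⟫ * ⟪X, W⟫ - ⟪X, Z⟫ * ⟪Y, W⟫

noncomputable def pseudoProjective (n : ℕ) (a b r : ℝ) (R : V → V → V → V → ℝ) (S : V → V → ℝ)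
    (X Y Z W : V) : ℝ :=
  a * R X Y Z W + b * (S Y Z * ⟪X, W⟫ - S X Z * ⟪Y, W⟫)
    - (r / n) * (a / ((n : ℝ) - 1) + b) * unitCurvatureTensor X Y Z W

theorem OrthonormalBasis.sum_apply_mul_inner {ι : Type*} [Fintype ι]
    (e : OrthonormalBasis ι ℝ V) (f : V →ₗ[ℝ] ℝ) (Y : V) :
    ∑ i, f (e i) * ⟪Y, e i⟫ = f Y := by
  conv_rhs => rw [← e.sum_repr' Y]
  simp [map_sum, real_inner_comm, mul_comm]

theorem OrthonormalBasis.sum_trace_sub_apply_mul_inner (e : OrthonormalBasis (Fin n) ℝ V)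
    (f : V →ₗ[ℝ] ℝ) (Y : V) :
    ∑ i, (f Y * ⟪e i, e i⟫ - f (e i) * ⟪Y, e i⟫) = ((n : ℝ) - 1) * f Y := by
  rw [Finset.sum_sub_distrib, e.sum_apply_mul_inner]
  simp [e.orthonormal.1]
  ring

theorem sum_pseudoProjective_contract (e : OrthonormalBasis (Fin n) ℝ V) (hn : 1 < n)
    (a b r : ℝ) (R : V → V → V → V → ℝ) (S : V → V → ℝ)
    (hS : ∀ Y Z, S Y Z = ∑ i, R (e i) Y Z (e i)) (hS_lin : ∀ Z, IsLinearMap ℝ (S · Z))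
    (Y Z : V) :
    ∑ i, pseudoProjective n a b r R S (e i) Y Z (e i)
      = (a + ((n : ℝ) - 1) * b) * (S Y Z - r / n * ⟪Y, Z⟫) := by
  have hn1 : (n : ℝ) - 1 ≠ 0 := sub_ne_zero.mpr (by exact_mod_cast hn.ne')
  have ricci := e.sum_trace_sub_apply_mul_inner (hS_lin Z).mk' Y
  have metric := e.sum_trace_sub_apply_mul_inner ((innerₗ V).flip Z) Y
  simp only [IsLinearMap.mk'_apply, LinearMap.flip_apply, innerₗ_apply_apply] at ricci metric
  simp only [pseudoProjective, unitCurvatureTensor, Finset.sum_add_distrib, Finset.sum_sub_distrib,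
    ← Finset.mul_sum, ← hS, ricci, metric]
  field_simp

theorem ricci_eq_of_pseudoProjective_eq_zero (e : OrthonormalBasis (Fin n) ℝ V) (hn : 1 < n)
    {a b r : ℝ} (hab : a + ((n : ℝ) - 1) * b ≠ 0) {R : V → V → V → V → ℝ} {S : V → V → ℝ}
    (hS : ∀ Y Z, S Y Z = ∑ i, R (e i) Y Z (e i)) (hS_lin : ∀ Z, IsLinearMap ℝ (S · Z))
    (hP : ∀ X Y Z W, pseudoProjective n a b r R S X Y Z W = 0) (Y Z : V) :
    S Y Z = r / n * ⟪Y, Z⟫ := by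
  have h := sum_pseudoProjective_contract e hn a b r R S hS hS_lin Y Z
  simp only [hP, Finset.sum_const_zero] at h
  exact sub_eq_zero.mp ((mul_eq_zero.mp h.symm).resolve_left hab)

theorem pseudoProjective_of_ricci_eq {a b r : ℝ} {R : V → V → V → V → ℝ} {S : V → V → ℝ}
    (hS : ∀ Y Z, S Y Z = r / n * ⟪Y, Z⟫) (X Y Z W : V) :
    pseudoProjective n a b r R S X Y Z W
      = a * (R X Y Z W - r / (n * ((n : ℝ) - 1)) * unitCurvatureTensor X Y Z W) := by
  simp only [pseudoProjective, unitCurvatureTensor, hS, div_mul_eq_div_div]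
  ring

end Curvature

theorem stmt16_general
    {V : Type*} [NormedAddCommGroup V] [InnerProductSpace ℝ V]
    (n : ℕ) (hn : 3 < n)
    (e : Module.Basis (Fin n) ℝ V) (he : Orthonormal ℝ e)
    (Rb : V → V → V → V → ℝ)
    (hlin2 : ∀ (c : ℝ) (X Y Y' Z W : V),
      Rb X (c • Y + Y') Z W = c * Rb X Y Z W + Rb X Y' Z W)
    (S : V → V → ℝ) (hS : ∀ Y Z : V, S Y Z = ∑ i, Rb (e i) Y Z (e i))
    (r : ℝ)
    (a b : ℝ)
    (Pb : V → V → V → V → ℝ)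
    (hP : ∀ X Y Z W : V, Pb X Y Z W =
      a * Rb X Y Z W
      + b * (S Y Z * ⟪X, W⟫ - S X Z * ⟪Y, W⟫)
      - (r / n) * (a / ((n : ℝ) - 1) + b)
        * (⟪Y, Z⟫ * ⟪X, W⟫ - ⟪X, Z⟫ * ⟪Y, W⟫))
    (ha : a ≠ 0) (hab : a + ((n : ℝ) - 1) * b ≠ 0)
    (hflat : ∀ X Y Z W : V, Pb X Y Z W = 0) :
    ∀ X Y Z W : V, Rb X Y Z W =
      (r / ((n : ℝ) * ((n : ℝ) - 1)))
        * (⟪Y, Z⟫ * ⟪X, W⟫ - ⟪X, Z⟫ * ⟪Y, W⟫) := by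
  set e' := e.toOrthonormalBasis he
  have hS' : ∀ Y Z, S Y Z = ∑ i, Rb (e' i) Y Z (e' i) := by
    simpa only [e', e.coe_toOrthonormalBasis he] using hS
  have hS_lin : ∀ Z, IsLinearMap ℝ (S · Z) := fun Z => IsLinearMap.of_smul_add fun c Y Y' => by
    simp only [hS, hlin2, Finset.sum_add_distrib, Finset.mul_sum, smul_eq_mul]
  have hPb : ∀ X Y Z W, pseudoProjective n a b r Rb S X Y Z W = 0 := fun X Y Z W =>
    (hP X Y Z W).symm.trans (hflat X Y Z W)
  have einstein := ricci_eq_of_pseudoProjective_eq_zero e' (by omega) hab hS' hS_lin hPb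
  intro X Y Z W
  have h := pseudoProjective_of_ricci_eq (a := a) (b := b) (R := Rb) einstein X Y Z W
  rw [hPb, zero_eq_mul, sub_eq_zero] at h
  exact h.resolve_left ha

theorem stmt16
    {V : Type*} [NormedAddCommGroup V] [InnerProductSpace ℝ V]
    (n : ℕ) (hn : 3 < n)
    (e : Module.Basis (Fin n) ℝ V) (he : Orthonormal ℝ e)
    (Rb : V → V → V → V → ℝ)
    (hlin1 : ∀ (c : ℝ) (X X' Y Z W : V),
      Rb (c • X + X') Y Z W = c * Rb X Y Z W + Rb X' Y Z W)
    (hlin2 : ∀ (c : ℝ) (X Y Y' Z W : V),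
      Rb X (c • Y + Y') Z W = c * Rb X Y Z W + Rb X Y' Z W)
    (hlin3 : ∀ (c : ℝ) (X Y Z Z' W : V),
      Rb X Y (c • Z + Z') W = c * Rb X Y Z W + Rb X Y Z' W)
    (hlin4 : ∀ (c : ℝ) (X Y Z W W' : V),
      Rb X Y Z (c • W + W') = c * Rb X Y Z W + Rb X Y Z W')
    (hskew1 : ∀ X Y Z W : V, Rb X Y Z W = - Rb Y X Z W)
    (hskew2 : ∀ X Y Z W : V, Rb X Y Z W = - Rb X Y W Z)
    (hpair : ∀ X Y Z W : V, Rb X Y Z W = Rb Z W X Y)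
    (S : V → V → ℝ) (hS : ∀ Y Z : V, S Y Z = ∑ i, Rb (e i) Y Z (e i))
    (r : ℝ) (hr : r = ∑ i, S (e i) (e i))
    (a b : ℝ)
    (Pb : V → V → V → V → ℝ)
    (hP : ∀ X Y Z W : V, Pb X Y Z W =
      a * Rb X Y Z W
      + b * (S Y Z * ⟪X, W⟫ - S X Z * ⟪Y, W⟫)
      - (r / n) * (a / ((n : ℝ) - 1) + b)
        * (⟪Y, Z⟫ * ⟪X, W⟫ - ⟪X, Z⟫ * ⟪Y, W⟫))
    (ha : a ≠ 0) (hb : b ≠ 0) (hab : a + ((n : ℝ) - 1) * b ≠ 0)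
    (hflat : ∀ X Y Z W : V, Pb X Y Z W = 0) :
    ∀ X Y Z W : V, Rb X Y Z W =
      (r / ((n : ℝ) * ((n : ℝ) - 1)))
        * (⟪Y, Z⟫ * ⟪X, W⟫ - ⟪X, Z⟫ * ⟪Y, W⟫) :=
  stmt16_general n hn e he Rb hlin2 S hS r a b Pb hP ha hab hflat
end
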